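/- Let X̂ be the k-DSM-CYC instance produced by the gadget reduction from a k-DSMI-CYC instance X, let μ be a weakly stable matching of X, and let μ̂ be the matching of X̂ induced by μ. If ((j_0, α_0, 0),…,(j_{k−1}, α_{k−1}, k−1)) is a strongly blocking family of μ̂, then j_t − δ_t(α_t) ≥ (k−1)² for every t ∈ {0,…,k−1}. -/

import Mathlib

open Classical

/-- Cyclic successor on `Fin k` (addition of `1` modulo `k`). -/
def fsucc {k : ℕ} (t : Fin k) : Fin k := ⟨(t.1 + 1) % k, Nat.mod_lt _ t.pos⟩

/-- Cyclic addition of a natural number, modulo `k`. -/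
def fadd {k : ℕ} (t : Fin k) (s : ℕ) : Fin k := ⟨(t.1 + s) % k, Nat.mod_lt _ t.pos⟩

/-- An agent consists of an identifier and a type in `{0, …, k-1}`. -/
abbrev Agent (ι : Type) (k : ℕ) := ι × Fin k

/-- A preference profile of a `k`-DSMI-CYC instance over identifier set `ι`:
each agent has a list of agents. -/
abbrev Prefs (ι : Type) (k : ℕ) := Agent ι k → List (Agent ι k)

/-- Validity of a `k`-DSMI-CYC instance: each preference list is duplicate-free and
contains only agents of the cyclically next type. -/
def ValidPrefs {ι : Type} {k : ℕ} (P : Prefs ι k) : Prop :=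
  (∀ a, (P a).Nodup) ∧ ∀ a b, b ∈ P a → b.2 = fsucc a.2

/-- Completeness: every agent of the next type appears in the preference list
(this is the `k`-DSM-CYC special case). -/
def CompletePrefs {ι : Type} {k : ℕ} (P : Prefs ι k) : Prop :=
  ∀ a b : Agent ι k, b.2 = fsucc a.2 → b ∈ P a

/-- `a` prefers `b` to `c`: `b` appears in `a`'s list, and `c` appears later or not at all. -/
def Prefers {ι : Type} [DecidableEq ι] {k : ℕ} (P : Prefs ι k) (a b c : Agent ι k) : Prop :=
  b ∈ P a ∧ (c ∉ P a ∨ (P a).idxOf b < (P a).idxOf c)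

/-- A family: a `k`-tuple where the `t`-th member has type `t` and finds the next member
acceptable. -/
def IsFamily {ι : Type} {k : ℕ} (P : Prefs ι k) (F : Fin k → Agent ι k) : Prop :=
  ∀ t, (F t).2 = t ∧ F (fsucc t) ∈ P (F t)

/-- A matching: a set of pairwise agent-disjoint families. -/
def IsMatching {ι : Type} {k : ℕ} (P : Prefs ι k) (μ : Set (Fin k → Agent ι k)) : Prop :=
  (∀ F ∈ μ, IsFamily P F) ∧ ∀ F ∈ μ, ∀ F' ∈ μ, ∀ t, F t = F' t → F = F'

/-- The partner `μ(a)` of agent `a` in matching `μ`: the next member of a family of `μ`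
containing `a`, and `a` itself if `a` is unmatched. -/
noncomputable def partner {ι : Type} {k : ℕ} (μ : Set (Fin k → Agent ι k)) (a : Agent ι k) :
    Agent ι k :=
  if h : ∃ F ∈ μ, F a.2 = a then h.choose (fsucc a.2) else a

/-- A strongly blocking family of `μ`: each member prefers the next member to its partner. -/
def StronglyBlocks {ι : Type} [DecidableEq ι] {k : ℕ} (P : Prefs ι k)
    (μ : Set (Fin k → Agent ι k)) (F : Fin k → Agent ι k) : Prop :=
  IsFamily P F ∧ ∀ t, Prefers P (F t) (F (fsucc t)) (partner μ (F t))

/-- A weakly stable matching: a matching admitting no strongly blocking family. -/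
def WeaklyStable {ι : Type} [DecidableEq ι] {k : ℕ} (P : Prefs ι k)
    (μ : Set (Fin k → Agent ι k)) : Prop :=
  IsMatching P μ ∧ ∀ F, ¬ StronglyBlocks P μ F

/-- The identifier component `J = {0, …, (k−1)²}` of the gadget reduction. -/
abbrev JId (k : ℕ) := Fin ((k - 1) ^ 2 + 1)

/-- Identifiers of the gadget instance: `J × A`, where `A` is the agent set of the
input instance (with identifiers `{0, …, n−1}`, so that agents compare
lexicographically). -/
abbrev HatId (n k : ℕ) := JId k × Agent (Fin n) k

/-- `P̂'_α`: the preference list of `α` with every entry `α'` replaced by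
`(0, α', t ⊕ 1)`. -/
def hatP' {n k : ℕ} (P : Prefs (Fin n) k) (a : Agent (Fin n) k) :
    List (Agent (HatId n k) k) :=
  (P a).map fun b => (((0 : JId k), b), fsucc a.2)

/-- All agents `(j', a, t')` of the gadget of `a`, for `j' ∈ J` in increasing order. -/
def gadgetColumn {n k : ℕ} (a : Agent (Fin n) k) (t' : Fin k) :
    List (Agent (HatId n k) k) :=
  (List.finRange ((k - 1) ^ 2 + 1)).map fun j => ((j, a), t')

/-- The agents of the input instance in increasing lexicographic order. -/
def enumA (n k : ℕ) : List (Agent (Fin n) k) :=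
  (List.finRange n).flatMap fun i => (List.finRange k).map fun t => (i, t)

/-- The prescribed initial segment of the preference list of each agent of the gadget
instance: a non-dummy agent `(0, α, t)` (where `α` has type `t`) starts with `P̂'_α`
followed by its own gadget's next row; a boundary dummy agent `((k−1)², α, t)` starts
with its own gadget's next row (up to `j' < (k−1)²`) followed by all boundary agents of
the next type in increasing lexicographic order; a non-boundary dummy agent starts with
its own gadget's next row.  The rest of each preference list is arbitrary. -/
def gadgetPrefix {n k : ℕ} (P : Prefs (Fin n) k) (b : Agent (HatId n k) k) :
    List (Agent (HatId n k) k) :=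
  if b.1.1 = (0 : JId k) ∧ b.1.2.2 = b.2 then
    hatP' P b.1.2 ++ gadgetColumn b.1.2 (fsucc b.2)
  else if b.1.1 = Fin.last ((k - 1) ^ 2) then
    ((List.finRange ((k - 1) ^ 2)).map fun j => ((j.castSucc, b.1.2), fsucc b.2)) ++
      ((enumA n k).map fun a' => ((Fin.last ((k - 1) ^ 2), a'), fsucc b.2))
  else
    gadgetColumn b.1.2 (fsucc b.2)

/-- `Phat` is a `k`-DSM-CYC instance produced by the gadget reduction from `P`:
it is valid and complete, and each preference list begins with the prescribed
initial segment. -/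
def IsGadgetLift {n k : ℕ} (P : Prefs (Fin n) k) (Phat : Prefs (HatId n k) k) : Prop :=
  ValidPrefs Phat ∧ CompletePrefs Phat ∧ ∀ b, (gadgetPrefix P b).IsPrefix (Phat b)

/-- The matching of the input instance induced by a matching `μ̂` of the gadget
instance: the families `(α₀, …, α_{k−1})` of the input instance such that
`((0, α₀, 0), …, (0, α_{k−1}, k−1)) ∈ μ̂`. -/
def inducedDown {n k : ℕ} (P : Prefs (Fin n) k)
    (μhat : Set (Fin k → Agent (HatId n k) k)) : Set (Fin k → Agent (Fin n) k) :=
  { G | IsFamily P G ∧ (fun t : Fin k => (((0 : JId k), G t), t)) ∈ μhat }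

/-- `δ_t(α) = 1` if `α` is matched in `μ` and has type `t`, and `δ_t(α) = 0`
otherwise. -/
noncomputable def delta {n k : ℕ} (μ : Set (Fin k → Agent (Fin n) k)) (t : Fin k)
    (a : Agent (Fin n) k) : ℕ :=
  if partner μ a ≠ a ∧ a.2 = t then 1 else 0

/-- The element `j + δ_t(α)` of `J` (for `j < (k−1)²` this is just `j + δ_t(α)`). -/
noncomputable def jshift {n k : ℕ} (μ : Set (Fin k → Agent (Fin n) k)) (j : ℕ) (t : Fin k)
    (a : Agent (Fin n) k) : JId k :=
  ⟨(j + delta μ t a) % ((k - 1) ^ 2 + 1), Nat.mod_lt _ (Nat.succ_pos _)⟩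

/-- `R_t`: the boundary agents `((k−1)², α', t)` with `δ_t(α') = 0`, in increasing
lexicographic order. -/
noncomputable def Rlist {n k : ℕ} (μ : Set (Fin k → Agent (Fin n) k)) (t : Fin k) :
    List (Agent (HatId n k) k) :=
  ((enumA n k).filter fun a => decide (delta μ t a = 0)).map
    fun a => ((Fin.last ((k - 1) ^ 2), a), t)

/-- The matching `μ̂` of the gadget instance induced by a matching `μ` of the input
instance, consisting of (i) the lifted families `((0, α₀, 0), …, (0, α_{k−1}, k−1))`
for `(α₀, …, α_{k−1}) ∈ μ`, (ii) the families `((j + δ₀(α), α, 0), …,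
(j + δ_{k−1}(α), α, k−1))` for `α ∈ A` and `j < (k−1)²`, and (iii) the families
`(R₀[s], …, R_{k−1}[s])` for `0 ≤ s < |A| − |μ|`. -/
noncomputable def inducedUp {n k : ℕ} (μ : Set (Fin k → Agent (Fin n) k)) :
    Set (Fin k → Agent (HatId n k) k) :=
  { F | (∃ G ∈ μ, ∀ t : Fin k, F t = (((0 : JId k), G t), t)) ∨
      (∃ (a : Agent (Fin n) k) (j : ℕ), j < (k - 1) ^ 2 ∧
        ∀ t : Fin k, F t = ((jshift μ j t a, a), t)) ∨
      (∃ s : ℕ, s < n * k - μ.ncard ∧ ∀ t : Fin k, (Rlist μ t)[s]? = some (F t)) }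

section AuxLemmas

lemma fsucc_ne {k : ℕ} (hk : 2 ≤ k) (t : Fin k) : fsucc t ≠ t := by
  intro h
  have hv : (t.1 + 1) % k = t.1 := congrArg Fin.val h
  have ht : t.1 < k := t.2
  rcases Nat.lt_or_ge (t.1 + 1) k with h' | h'
  · rw [Nat.mod_eq_of_lt h'] at hv; omega
  · have : t.1 + 1 = k := by omega
    rw [this, Nat.mod_self] at hv; omega

lemma fadd_zero {k : ℕ} (t : Fin k) : fadd t 0 = t := by
  apply Fin.ext; simp [fadd, Nat.mod_eq_of_lt t.2]

lemma fadd_succ {k : ℕ} (t : Fin k) (s : ℕ) : fadd t (s + 1) = fsucc (fadd t s) := by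
  apply Fin.ext
  show (t.1 + (s + 1)) % k = ((t.1 + s) % k + 1) % k
  rw [Nat.mod_add_mod, ← Nat.add_assoc]

lemma fadd_self {k : ℕ} (t : Fin k) : fadd t k = t := by
  apply Fin.ext
  show (t.1 + k) % k = t.1
  rw [Nat.add_mod_right, Nat.mod_eq_of_lt t.2]

lemma fadd_surj {k : ℕ} (t u : Fin k) : ∃ s : ℕ, fadd t s = u := by
  refine ⟨(k - t.1) + u.1, Fin.ext ?_⟩
  show (t.1 + ((k - t.1) + u.1)) % k = u.1
  have ht : t.1 < k := t.2
  have : t.1 + ((k - t.1) + u.1) = k + u.1 := by omega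
  rw [this, Nat.add_mod_left, Nat.mod_eq_of_lt u.2]

lemma hatP'_length {n k : ℕ} (P : Prefs (Fin n) k) (a : Agent (Fin n) k) :
    (hatP' P a).length = (P a).length := by simp [hatP']

lemma hatP'_getElem? {n k : ℕ} (P : Prefs (Fin n) k) (a : Agent (Fin n) k) {i : ℕ}
    (h : i < (P a).length) :
    (hatP' P a)[i]? = some ((((0 : JId k), (P a)[i]), fsucc a.2)) := by
  rw [hatP', List.getElem?_map, List.getElem?_eq_getElem h]
  rfl

lemma gadgetColumn_length {n k : ℕ} (a : Agent (Fin n) k) (t' : Fin k) :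
    (gadgetColumn a t').length = (k - 1) ^ 2 + 1 := by simp [gadgetColumn]

lemma gadgetColumn_getElem? {n k : ℕ} (a : Agent (Fin n) k) (t' : Fin k) {i : ℕ}
    (h : i < (k - 1) ^ 2 + 1) :
    (gadgetColumn a t')[i]? = some (((⟨i, h⟩ : JId k), a), t') := by
  rw [gadgetColumn, List.getElem?_map,
    List.getElem?_eq_getElem (by rw [List.length_finRange]; exact h), List.getElem_finRange]
  rfl

lemma boundaryRow_getElem? {n k : ℕ} (a : Agent (Fin n) k) (t' : Fin k) {i : ℕ}
    (h : i < (k - 1) ^ 2) :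
    (((List.finRange ((k - 1) ^ 2)).map fun j =>
      ((j.castSucc, a), t') : List (Agent (HatId n k) k)))[i]? =
      some (((⟨i, Nat.lt_succ_of_lt h⟩ : JId k), a), t') := by
  rw [List.getElem?_map, List.getElem?_eq_getElem (by rw [List.length_finRange]; exact h),
    List.getElem_finRange]
  rfl

section BEqIndexOf
variable {α : Type*} [BEq α] [LawfulBEq α]

theorem my_indexOf_cons' (b a : α) (l : List α) :
    (b :: l).idxOf a = if b = a then 0 else l.idxOf a + 1 := by
  rw [List.idxOf_cons]
  rcases Bool.eq_false_or_eq_true (b == a) with hbeq | hbeq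
  · rw [hbeq, cond_true, if_pos (eq_of_beq hbeq)]
  · rw [hbeq, cond_false,
      if_neg (by intro h; rw [h, beq_self_eq_true] at hbeq; cases hbeq)]

theorem my_indexOf_lt_length {l : List α} {a : α} (h : a ∈ l) :
    l.idxOf a < l.length := by
  induction l with
  | nil => simp at h
  | cons b l ih =>
    rw [my_indexOf_cons']
    by_cases hb : b = a
    · simp [hb]
    · rw [if_neg hb, List.length_cons]
      have ha : a ∈ l := by
        rcases List.mem_cons.1 h with h1 | h1
        · exact absurd h1.symm hb
        · exact h1
      exact Nat.succ_lt_succ (ih ha)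

theorem my_getElem?_indexOf {l : List α} {a : α} (h : a ∈ l) :
    l[l.idxOf a]? = some a := by
  induction l with
  | nil => simp at h
  | cons b l ih =>
    rw [my_indexOf_cons']
    by_cases hb : b = a
    · rw [if_pos hb, List.getElem?_cons_zero, hb]
    · rw [if_neg hb, List.getElem?_cons_succ]
      refine ih ?_
      rcases List.mem_cons.1 h with h1 | h1
      · exact absurd h1.symm hb
      · exact h1

theorem my_getElem_indexOf {l : List α} {a : α} (h : a ∈ l)
    (h' : l.idxOf a < l.length) : l[l.idxOf a] = a := by
  have h2 := my_getElem?_indexOf h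
  rw [List.getElem?_eq_getElem h'] at h2
  exact Option.some_injective _ h2

theorem my_indexOf_getElem {l : List α} (hnd : l.Nodup) {i : ℕ} (hi : i < l.length) :
    l.idxOf l[i] = i := by
  induction l generalizing i with
  | nil => simp at hi
  | cons b l ih =>
    rcases i with _ | i
    · simp [my_indexOf_cons']
    · rw [List.getElem_cons_succ, my_indexOf_cons']
      have hne : b ≠ l[i]'(by simpa using hi) := by
        intro h
        exact (List.nodup_cons.1 hnd).1 (h ▸ List.getElem_mem _)
      rw [if_neg hne, ih (List.nodup_cons.1 hnd).2]

end BEqIndexOf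

lemma prefix_index_lt {α : Type*} {instB : BEq α}
    {pre L : List α} (hpre : pre <+: L)
    (hnd : L.Nodup) {x y : α} {p : ℕ} (hxp' : pre[p]? = some x)
    (hy : y ∈ L) (hxy : L.idxOf y < L.idxOf x)
    (instL : @LawfulBEq α instB) :
    ∃ q : ℕ, q < p ∧ pre[q]? = some y := by
  letI : BEq α := instB
  haveI := instL
  obtain ⟨hp, hxp⟩ := List.getElem?_eq_some_iff.1 hxp'
  have hpL : p < L.length := lt_of_lt_of_le hp hpre.length_le
  have hLx : L[p] = x := by rw [← hpre.getElem hp]; exact hxp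
  have hix : L.idxOf x = p := by rw [← hLx]; exact my_indexOf_getElem hnd hpL
  have hq : L.idxOf y < p := by omega
  refine ⟨L.idxOf y, hq, ?_⟩
  have hql : L.idxOf y < pre.length := lt_trans hq hp
  rw [List.getElem?_eq_getElem hql]
  refine congrArg some ?_
  exact (hpre.getElem hql).trans (my_getElem_indexOf hy (lt_trans hq hpL))

end AuxLemmas

/-- (Boundary lemma.)  Let `μ` be a weakly stable matching of the
input instance and `μ̂` the induced matching of the gadget instance.  If
`((j₀, α₀, 0), …, (j_{k−1}, α_{k−1}, k−1))` strongly blocks `μ̂`, then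
`j_t − δ_t(α_t) ≥ (k−1)²` (i.e. `j_t ≥ (k−1)² + δ_t(α_t)`) for every `t`. -/
theorem gadget_boundary {n k : ℕ} (hk : 3 ≤ k) (P : Prefs (Fin n) k)
    (hP : ValidPrefs P) (Phat : Prefs (HatId n k) k) (hlift : IsGadgetLift P Phat)
    (μ : Set (Fin k → Agent (Fin n) k)) (hμ : WeaklyStable P μ)
    (jv : Fin k → JId k) (av : Fin k → Agent (Fin n) k)
    (hblock : StronglyBlocks Phat (inducedUp μ) (fun t : Fin k => ((jv t, av t), t))) :
    ∀ t : Fin k, (k - 1) ^ 2 + delta μ t (av t) ≤ (jv t).1 := by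
  classical
  set K2 := (k - 1) ^ 2 with hK2def
  have hK2pos : 0 < K2 := pow_pos (by omega) 2
  set F : Fin k → Agent (HatId n k) k := (fun t : Fin k => ((jv t, av t), t)) with hFdef
  set ND : Fin k → Prop := fun t => jv t = 0 ∧ (av t).2 = t with hNDdef
  set Φ : Fin k → ℤ := fun t => ((jv t).1 : ℤ) - (delta μ t (av t) : ℤ) with hΦdef
  have hk2 : 2 ≤ k := by omega
  have sm_iff : ∀ u : Fin k, ((jv u).1 < K2 + delta μ u (av u)) ↔ Φ u < (K2 : ℤ) := by
    intro u; simp only [hΦdef]; omega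
  have hval := hlift.1
  have hcomp := hlift.2.1
  have hpreall := hlift.2.2
  have delta_le : ∀ (u : Fin k) (a : Agent (Fin n) k), delta μ u a ≤ 1 := by
    intro u a; rw [delta]; split <;> omega
  have delta_pos : ∀ (u : Fin k) (a : Agent (Fin n) k), delta μ u a = 1 →
      partner μ a ≠ a ∧ a.2 = u := by
    intro u a h
    by_contra hc
    rw [delta, if_neg hc] at h
    exact absurd h (by omega)
  have delta_zero_of : ∀ (u : Fin k) (a : Agent (Fin n) k), a.2 ≠ u → delta μ u a = 0 := by
    intro u a h; rw [delta, if_neg (by tauto)]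
  have delta_self : ∀ (u : Fin k) (a : Agent (Fin n) k), a.2 = u → delta μ u a = 0 →
      partner μ a = a := by
    intro u a h2 h0
    by_contra hc
    rw [delta, if_pos ⟨hc, h2⟩] at h0
    exact one_ne_zero h0
  have not_self : ∀ a : Agent (Fin n) k, a ∉ P a := by
    intro a hm
    exact fsucc_ne hk2 a.2 (hP.2 a a hm).symm
  have partnerμ_eq : ∀ G, G ∈ μ → ∀ u : Fin k, partner μ (G u) = G (fsucc u) := by
    intro G hG u
    have h2 : (G u).2 = u := (hμ.1.1 G hG u).1
    have hexG : ∃ H ∈ μ, H (G u).2 = G u := ⟨G, hG, by rw [h2]⟩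
    rw [partner, dif_pos hexG]
    have hc := hexG.choose_spec
    have heq : hexG.choose = G := by
      apply hμ.1.2 _ hc.1 G hG u
      exact (congrArg hexG.choose h2.symm).trans hc.2
    rw [heq, h2]
  have key : ∀ t : Fin k, (jv t).1 < K2 + delta μ t (av t) →
      ((ND t → ND (fsucc t) ∧ av (fsucc t) ∈ P (av t) ∧
          Prefers P (av t) (av (fsucc t)) (partner μ (av t))) ∧
       (¬ ND t → Φ (fsucc t) < Φ t)) := by
    intro t ht
    have hndL : (Phat (F t)).Nodup := hval.1 (F t)
    have hpreL : (gadgetPrefix P (F t)).IsPrefix (Phat (F t)) := hpreall (F t)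
    have hprefers := hblock.2 t
    -- existence of a family of `inducedUp μ` containing `F t`
    have hex : ∃ F'' ∈ inducedUp μ, F'' (F t).2 = F t := by
      by_cases hd : partner μ (av t) ≠ av t ∧ (av t).2 = t
      · by_cases hj0 : jv t = 0
        · -- clause (i)
          have hexμ : ∃ G ∈ μ, G (av t).2 = av t := by
            by_contra hc
            rw [partner, dif_neg hc] at hd
            exact hd.1 rfl
          obtain ⟨G, hG, hGt⟩ := hexμ
          refine ⟨fun s => (((0 : JId k), G s), s), Or.inl ⟨G, hG, fun s => rfl⟩, ?_⟩
          have hGt' : G t = av t := (congrArg G hd.2.symm).trans hGt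
          show (((0 : JId k), G t), t) = ((jv t, av t), t)
          rw [hGt', hj0]
        · -- clause (ii) with j = jv t - 1
          have hδ : delta μ t (av t) = 1 := by rw [delta, if_pos hd]
          have hjne : (jv t).1 ≠ 0 := fun h => hj0 (Fin.ext h)
          have hjlt : (jv t).1 < K2 + 1 := (jv t).2
          refine ⟨fun s => ((jshift μ ((jv t).1 - 1) s (av t), av t), s),
            Or.inr (Or.inl ⟨av t, (jv t).1 - 1, by omega, fun s => rfl⟩), ?_⟩
          show ((jshift μ ((jv t).1 - 1) t (av t), av t), t) = ((jv t, av t), t)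
          have heq : jshift μ ((jv t).1 - 1) t (av t) = jv t := by
            apply Fin.ext
            show ((jv t).1 - 1 + delta μ t (av t)) % (K2 + 1) = (jv t).1
            rw [hδ, Nat.mod_eq_of_lt (by omega)]
            omega
          rw [heq]
      · -- delta = 0, clause (ii) with j = jv t
        have hδ : delta μ t (av t) = 0 := by rw [delta, if_neg hd]
        have hjlt : (jv t).1 < K2 := by omega
        refine ⟨fun s => ((jshift μ (jv t).1 s (av t), av t), s),
          Or.inr (Or.inl ⟨av t, (jv t).1, hjlt, fun s => rfl⟩), ?_⟩
        show ((jshift μ (jv t).1 t (av t), av t), t) = ((jv t, av t), t)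
        have heq : jshift μ (jv t).1 t (av t) = jv t := by
          apply Fin.ext
          show ((jv t).1 + delta μ t (av t)) % (K2 + 1) = (jv t).1
          rw [hδ, Nat.add_zero, Nat.mod_eq_of_lt (jv t).2]
        rw [heq]
    have hF'mem : hex.choose ∈ inducedUp μ := hex.choose_spec.1
    have hF't : hex.choose t = F t := hex.choose_spec.2
    have hpart : partner (inducedUp μ) (F t) = hex.choose (fsucc t) := by
      rw [partner, dif_pos hex]
    rcases hF'mem with ⟨G, hG, hGs⟩ | ⟨a, j, hj, hFs⟩ | ⟨s, hs, hRs⟩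
    · -- clause (i): non-dummy matched agent
      have hFt : (((0 : JId k), G t), t) = F t := by rw [← hGs t, hF't]
      have h' : ((0 : JId k) = jv t ∧ G t = av t) ∧ True := by
        simpa [hFdef, Prod.ext_iff] using hFt
      have havt : av t = G t := h'.1.2.symm
      have hjv : jv t = 0 := h'.1.1.symm
      have hGfam := hμ.1.1 G hG
      have hα2 : (av t).2 = t := by rw [havt]; exact (hGfam t).1
      have hND : ND t := ⟨hjv, hα2⟩
      have hpμ : partner μ (av t) = G (fsucc t) := by rw [havt]; exact partnerμ_eq G hG t
      have hmem_mα : G (fsucc t) ∈ P (av t) := by rw [havt]; exact (hGfam t).2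
      have hxval : partner (inducedUp μ) (F t) = (((0 : JId k), G (fsucc t)), fsucc t) := by
        rw [hpart, hGs]
      have hprefix : gadgetPrefix P (F t) =
          hatP' P (av t) ++ gadgetColumn (av t) (fsucc t) := by
        rw [gadgetPrefix, if_pos ⟨hjv, hα2⟩]
      have hpre2 : (hatP' P (av t) ++ gadgetColumn (av t) (fsucc t)) <+: Phat (F t) :=
        hprefix ▸ hpreL
      have hpe : (hatP' P (av t) ++
          gadgetColumn (av t) (fsucc t))[(P (av t)).idxOf (G (fsucc t))]? =
          some ((((0 : JId k), G (fsucc t)), fsucc t)) := by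
        rw [List.getElem?_append,
          if_pos (by rw [hatP'_length]; exact my_indexOf_lt_length hmem_mα),
          hatP'_getElem? P (av t) (my_indexOf_lt_length hmem_mα),
          my_getElem_indexOf hmem_mα (my_indexOf_lt_length hmem_mα), hα2]
      have hxmem : ((((0 : JId k), G (fsucc t)), fsucc t) : Agent (HatId n k) k) ∈
          Phat (F t) := hcomp (F t) _ rfl
      rw [hxval] at hprefers
      have hxy := hprefers.2.resolve_left (not_not_intro hxmem)
      obtain ⟨q, hq, hqe⟩ := prefix_index_lt hpre2 hndL hpe hprefers.1 hxy (by exact @Prod.instLawfulBEq _ _ (@instBEqOfDecidableEq _ _) (@instBEqOfDecidableEq _ _) (@instLawfulBEq _ _) (@instLawfulBEq _ _))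
      have hq0 : q < (P (av t)).length := lt_trans hq (my_indexOf_lt_length hmem_mα)
      rw [List.getElem?_append, if_pos (by rw [hatP'_length]; exact hq0),
        hatP'_getElem? P (av t) hq0, hα2] at hqe
      have hqe'' : (((0 : JId k), (P (av t))[q]), fsucc t) = F (fsucc t) :=
        Option.some_injective _ hqe
      have h'' : ((0 : JId k) = jv (fsucc t) ∧ (P (av t))[q] = av (fsucc t)) ∧ True := by
        simpa [hFdef, Prod.ext_iff] using hqe''
      have hjv' : jv (fsucc t) = 0 := h''.1.1.symm
      have hav' : av (fsucc t) = (P (av t))[q] := h''.1.2.symm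
      have hβmem : av (fsucc t) ∈ P (av t) := by rw [hav']; exact List.getElem_mem hq0
      have hβ2 : (av (fsucc t)).2 = fsucc t := by
        rw [hP.2 (av t) _ hβmem, hα2]
      refine ⟨fun _ => ⟨⟨hjv', hβ2⟩, hβmem, ⟨hβmem, Or.inr ?_⟩⟩, fun hn => absurd hND hn⟩
      rw [hpμ]
      have hidxβ : (P (av t)).idxOf (av (fsucc t)) = q := by
        rw [hav']; exact my_indexOf_getElem (hP.1 (av t)) hq0
      rw [hidxβ]
      exact hq
    · -- clause (ii): agents inside a gadget
      have hFt : ((jshift μ j t a, a), t) = F t := by rw [← hFs t, hF't]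
      have h' : (jshift μ j t a = jv t ∧ a = av t) ∧ True := by
        simpa [hFdef, Prod.ext_iff] using hFt
      have hav : av t = a := h'.1.2.symm
      have hdlet := delta_le t a
      have hdlet' := delta_le (fsucc t) a
      have hjvval : (jv t).1 = j + delta μ t a := by
        rw [← h'.1.1]
        show (j + delta μ t a) % (K2 + 1) = j + delta μ t a
        exact Nat.mod_eq_of_lt (by omega)
      have hxval : partner (inducedUp μ) (F t) = ((jshift μ j (fsucc t) a, a), fsucc t) := by
        rw [hpart, hFs]
      have hjs' : (jshift μ j (fsucc t) a).1 = j + delta μ (fsucc t) a :=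
        Nat.mod_eq_of_lt (by omega)
      have hxmem : (((jshift μ j (fsucc t) a, a), fsucc t) : Agent (HatId n k) k) ∈
          Phat (F t) := hcomp (F t) _ rfl
      rw [hxval] at hprefers
      have hxy := hprefers.2.resolve_left (not_not_intro hxmem)
      by_cases hND : ND t
      · -- non-dummy unmatched agent
        have hα2 : (av t).2 = t := hND.2
        have ha2 : a.2 = t := by rw [← hav]; exact hα2
        have hjv0 : (jv t).1 = 0 := by rw [hND.1]; rfl
        have hj0 : j = 0 := by omega
        have hδ0 : delta μ t a = 0 := by omega
        have hpa : partner μ (av t) = av t := by rw [hav]; exact delta_self t a ha2 hδ0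
        have hδ'0 : delta μ (fsucc t) a = 0 := by
          apply delta_zero_of
          rw [ha2]
          exact fun h => fsucc_ne hk2 t h.symm
        have hprefix : gadgetPrefix P (F t) =
            hatP' P (av t) ++ gadgetColumn (av t) (fsucc t) := by
          rw [gadgetPrefix, if_pos ⟨hND.1, hα2⟩]
        have hpre2 : (hatP' P (av t) ++ gadgetColumn (av t) (fsucc t)) <+: Phat (F t) :=
          hprefix ▸ hpreL
        have hpe : (hatP' P (av t) ++
            gadgetColumn (av t) (fsucc t))[(P (av t)).length]? =
            some (((jshift μ j (fsucc t) a, a), fsucc t)) := by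
          rw [List.getElem?_append, if_neg (by rw [hatP'_length]; omega), hatP'_length,
            Nat.sub_self, gadgetColumn_getElem? (av t) (fsucc t) (Nat.succ_pos K2)]
          simp only [Option.some.injEq, Prod.mk.injEq, Fin.ext_iff]
          refine ⟨⟨?_, hav⟩, trivial⟩
          rw [hjs', hδ'0, hj0]
        obtain ⟨q, hq, hqe⟩ := prefix_index_lt hpre2 hndL hpe hprefers.1 hxy (by exact @Prod.instLawfulBEq _ _ (@instBEqOfDecidableEq _ _) (@instBEqOfDecidableEq _ _) (@instLawfulBEq _ _) (@instLawfulBEq _ _))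
        have hq0 : q < (P (av t)).length := hq
        rw [List.getElem?_append, if_pos (by rw [hatP'_length]; exact hq0),
          hatP'_getElem? P (av t) hq0, hα2] at hqe
        have hqe'' : (((0 : JId k), (P (av t))[q]), fsucc t) = F (fsucc t) :=
          Option.some_injective _ hqe
        have h'' : ((0 : JId k) = jv (fsucc t) ∧ (P (av t))[q] = av (fsucc t)) ∧ True := by
          simpa [hFdef, Prod.ext_iff] using hqe''
        have hjv' : jv (fsucc t) = 0 := h''.1.1.symm
        have hav' : av (fsucc t) = (P (av t))[q] := h''.1.2.symm
        have hβmem : av (fsucc t) ∈ P (av t) := by rw [hav']; exact List.getElem_mem hq0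
        have hβ2 : (av (fsucc t)).2 = fsucc t := by
          rw [hP.2 (av t) _ hβmem, hα2]
        refine ⟨fun _ => ⟨⟨hjv', hβ2⟩, hβmem, ⟨hβmem, Or.inl ?_⟩⟩, fun hn => absurd hND hn⟩
        rw [hpa]
        exact not_self (av t)
      · -- dummy agent
        refine ⟨fun h => absurd h hND, fun _ => ?_⟩
        by_cases hb : (jv t).1 = K2
        · -- boundary dummy with delta = 1
          have hδ1 : delta μ t a = 1 := by omega
          have hjval : j = K2 - 1 := by omega
          have ha2 : a.2 = t := (delta_pos t a hδ1).2
          have hδ'0 : delta μ (fsucc t) a = 0 := by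
            apply delta_zero_of
            rw [ha2]
            exact fun h => fsucc_ne hk2 t h.symm
          have hprefix : gadgetPrefix P (F t) =
              ((List.finRange K2).map fun j'' =>
                ((j''.castSucc, av t), fsucc t)) ++
              ((enumA n k).map fun a' => ((Fin.last K2, a'), fsucc t)) := by
            rw [gadgetPrefix, if_neg (fun hc => hND ⟨hc.1, hc.2⟩), if_pos (Fin.ext hb)]
          have hpre2 : (((List.finRange K2).map fun j'' =>
              ((j''.castSucc, av t), fsucc t)) ++
              ((enumA n k).map fun a' => ((Fin.last K2, a'), fsucc t))) <+: Phat (F t) :=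
            hprefix ▸ hpreL
          have hpe : ((((List.finRange K2).map fun j'' => ((j''.castSucc, av t), fsucc t)) ++
              ((enumA n k).map fun a' => ((Fin.last K2, a'), fsucc t))))[K2 - 1]? =
              some (((jshift μ j (fsucc t) a, a), fsucc t)) := by
            rw [List.getElem?_append,
              if_pos (by rw [List.length_map, List.length_finRange]; omega),
              boundaryRow_getElem? (av t) (fsucc t) (by omega : K2 - 1 < K2)]
            simp only [Option.some.injEq, Prod.mk.injEq, Fin.ext_iff]
            refine ⟨⟨?_, hav⟩, trivial⟩
            rw [hjs', hδ'0, hjval]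
            omega
          obtain ⟨q, hq, hqe⟩ := prefix_index_lt hpre2 hndL hpe hprefers.1 hxy (by exact @Prod.instLawfulBEq _ _ (@instBEqOfDecidableEq _ _) (@instBEqOfDecidableEq _ _) (@instLawfulBEq _ _) (@instLawfulBEq _ _))
          have hqK : q < K2 := by omega
          rw [List.getElem?_append,
            if_pos (by rw [List.length_map, List.length_finRange]; omega),
            boundaryRow_getElem? (av t) (fsucc t) hqK] at hqe
          have hqe'' : (((⟨q, Nat.lt_succ_of_lt hqK⟩ : JId k), av t), fsucc t) =
              F (fsucc t) := Option.some_injective _ hqe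
          have h'' : ((⟨q, Nat.lt_succ_of_lt hqK⟩ : JId k) = jv (fsucc t) ∧
              av t = av (fsucc t)) ∧ True := by
            simpa [hFdef, Prod.ext_iff] using hqe''
          have hjq : (jv (fsucc t)).1 = q := by rw [← h''.1.1]
          have hav' : av (fsucc t) = a := by rw [← h''.1.2, hav]
          have hδ'' : delta μ (fsucc t) (av (fsucc t)) = 0 := by rw [hav']; exact hδ'0
          have hδt : delta μ t (av t) = 1 := by rw [hav]; exact hδ1
          simp only [hΦdef]
          rw [hjq, hδ'', hb, hδt]
          push_cast
          omega
        · -- non-boundary dummy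
          have hblt : (jv t).1 < K2 := by
            have := (jv t).2; omega
          have hprefix : gadgetPrefix P (F t) = gadgetColumn (av t) (fsucc t) := by
            rw [gadgetPrefix, if_neg (fun hc => hND ⟨hc.1, hc.2⟩),
              if_neg (fun hc => hb (congrArg Fin.val hc))]
          have hpre2 : gadgetColumn (av t) (fsucc t) <+: Phat (F t) := hprefix ▸ hpreL
          have hplt : j + delta μ (fsucc t) a < K2 + 1 := by omega
          have hpe : (gadgetColumn (av t) (fsucc t))[j + delta μ (fsucc t) a]? =
              some (((jshift μ j (fsucc t) a, a), fsucc t)) := by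
            rw [gadgetColumn_getElem? (av t) (fsucc t) hplt]
            simp only [Option.some.injEq, Prod.mk.injEq, Fin.ext_iff]
            refine ⟨⟨?_, hav⟩, trivial⟩
            rw [hjs']
          obtain ⟨q, hq, hqe⟩ := prefix_index_lt hpre2 hndL hpe hprefers.1 hxy (by exact @Prod.instLawfulBEq _ _ (@instBEqOfDecidableEq _ _) (@instBEqOfDecidableEq _ _) (@instLawfulBEq _ _) (@instLawfulBEq _ _))
          have hqK : q < K2 + 1 := by omega
          rw [gadgetColumn_getElem? (av t) (fsucc t) hqK] at hqe
          have hqe'' : (((⟨q, hqK⟩ : JId k), av t), fsucc t) = F (fsucc t) :=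
            Option.some_injective _ hqe
          have h'' : ((⟨q, hqK⟩ : JId k) = jv (fsucc t) ∧ av t = av (fsucc t)) ∧ True := by
            simpa [hFdef, Prod.ext_iff] using hqe''
          have hjq : (jv (fsucc t)).1 = q := by rw [← h''.1.1]
          have hav' : av (fsucc t) = a := by rw [← h''.1.2, hav]
          have hδ'' : delta μ (fsucc t) (av (fsucc t)) = delta μ (fsucc t) a := by rw [hav']
          simp only [hΦdef]
          rw [hjq, hδ'', hjvval, hav]
          push_cast
          omega
    · -- clause (iii): boundary families, impossible since jv t is small
      exfalso
      have h := hRs t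
      rw [hF't] at h
      obtain ⟨hlt, heq⟩ := List.getElem?_eq_some_iff.1 h
      have hmem : F t ∈ Rlist μ t := heq ▸ List.getElem_mem hlt
      rw [Rlist, List.mem_map] at hmem
      obtain ⟨a', ha', heq'⟩ := hmem
      have h2 : (Fin.last K2 = jv t ∧ a' = av t) ∧ True := by
        simpa [hFdef, Prod.ext_iff] using heq'
      have hd0 : delta μ t a' = 0 := by
        have := (List.mem_filter.1 ha').2
        simpa using this
      have hlast : (jv t).1 = K2 := by rw [← h2.1.1]; rfl
      rw [h2.1.2] at hd0
      omega
  -- small predicate is preserved along the cycle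
  have sm_step : ∀ u : Fin k, (jv u).1 < K2 + delta μ u (av u) →
      (jv (fsucc u)).1 < K2 + delta μ (fsucc u) (av (fsucc u)) := by
    intro u hu
    by_cases hnd : ND u
    · have h0 := ((key u hu).1 hnd).1.1
      have : (jv (fsucc u)).1 = 0 := by rw [h0]; rfl
      omega
    · have := (key u hu).2 hnd
      rw [sm_iff] at hu ⊢
      omega
  intro t
  by_contra hcon
  push_neg at hcon
  have hall : ∀ s : ℕ, (jv (fadd t s)).1 < K2 + delta μ (fadd t s) (av (fadd t s)) := by
    intro s
    induction s with
    | zero => rw [fadd_zero]; exact hcon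
    | succ s ih => rw [fadd_succ]; exact sm_step _ ih
  have hallt : ∀ u : Fin k, (jv u).1 < K2 + delta μ u (av u) := by
    intro u
    obtain ⟨s, hs⟩ := fadd_surj t u
    rw [← hs]; exact hall s
  by_cases hex : ∃ t1 : Fin k, ND t1
  · obtain ⟨t1, ht1⟩ := hex
    have hNDall : ∀ s : ℕ, ND (fadd t1 s) := by
      intro s
      induction s with
      | zero => rw [fadd_zero]; exact ht1
      | succ s ih => rw [fadd_succ]; exact ((key _ (hallt _)).1 ih).1
    have hNDt : ∀ u : Fin k, ND u := by
      intro u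
      obtain ⟨s, hs⟩ := fadd_surj t1 u
      rw [← hs]; exact hNDall s
    refine hμ.2 av ⟨fun u => ⟨(hNDt u).2, ((key u (hallt u)).1 (hNDt u)).2.1⟩,
      fun u => ((key u (hallt u)).1 (hNDt u)).2.2⟩
  · push_neg at hex
    have hdec : ∀ u : Fin k, Φ (fsucc u) < Φ u := fun u => (key u (hallt u)).2 (hex u)
    have hstep : ∀ s : ℕ, Φ (fadd t s) ≤ Φ t - s := by
      intro s
      induction s with
      | zero => rw [fadd_zero]; simp
      | succ s ih =>
        rw [fadd_succ]
        have := hdec (fadd t s)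
        push_cast
        omega
    have := hstep k
    rw [fadd_self] at this
    omega
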